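/- arXiv:math/0107162 — 4 statements merged into one kernel-verified Lean document; each statement's English description precedes it below -/
import Mathlib

section
/- Let M be an (n+m)×(n'+m') block matrix with blocks M11 (n×n'), M12, M21, M22. If n' ≤ n and N is an n'×m' matrix with M11·N = M12, then M equals the product of the block matrices [[M11·I_{n',n}, 0],[M21·I_{n',n}, I_m]], [[I_{n,n'}, 0],[0, M22 - M21·N]], and [[I_{n'}, N],[0, I_{m'}]]. -/
/-- The `p × q` "defective identity" matrix with `(i,j)` entry `1` if `i = j` and `0` otherwise. -/
def defId (R : Type*) [CommRing R] (p q : ℕ) : Matrix (Fin p) (Fin q) R :=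
  Matrix.of fun i j => if (i : ℕ) = (j : ℕ) then 1 else 0

lemma defId_mul_defId {R : Type*} [CommRing R] {p q : ℕ} (h : p ≤ q) :
    defId R p q * defId R q p = 1 := by
  ext i j
  rw [Matrix.mul_apply]
  rw [Finset.sum_eq_single (⟨(i : ℕ), lt_of_lt_of_le i.isLt h⟩ : Fin q)]
  · simp [defId, Matrix.one_apply, Fin.ext_iff]
  · intro k _ hk
    simp only [defId, Matrix.of_apply]
    have : (i : ℕ) ≠ (k : ℕ) := fun he => hk (by ext; simp [← he])
    simp [this]
  · simp

theorem stmt0 {R : Type*} [CommRing R] {n m n' m' : ℕ}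
    (M11 : Matrix (Fin n) (Fin n') R) (M12 : Matrix (Fin n) (Fin m') R)
    (M21 : Matrix (Fin m) (Fin n') R) (M22 : Matrix (Fin m) (Fin m') R)
    (N : Matrix (Fin n') (Fin m') R)
    (hle : n' ≤ n) (hN : M11 * N = M12) :
    Matrix.fromBlocks M11 M12 M21 M22 =
      (Matrix.fromBlocks (M11 * defId R n' n) 0 (M21 * defId R n' n) 1 :
        Matrix (Fin n ⊕ Fin m) (Fin n ⊕ Fin m) R) *
        Matrix.fromBlocks (defId R n n') 0 0 (M22 - M21 * N) *
        Matrix.fromBlocks 1 N 0 1 := by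
  rw [Matrix.fromBlocks_multiply]
  erw [Matrix.fromBlocks_multiply]
  simp [Matrix.mul_assoc, defId_mul_defId hle, ← hN, Matrix.mul_sub, Matrix.mul_add, mul_add]
end

section
/- The determinant of a square defective identity matrix is 0 or 1. -/
/-- A matrix is a defective identity if all its entries are `0` or `1` and the positions of
its `1` entries have strictly increasing row and column indices. -/
def IsDefId {b w : ℕ} (D : Matrix (Fin b) (Fin w) ℤ) : Prop :=
  (∀ i j, D i j = 0 ∨ D i j = 1) ∧
  ∀ i j i' j', D i j = 1 → D i' j' = 1 →
    (i = i' ∧ j = j') ∨ (i < i' ∧ j < j') ∨ (i' < i ∧ j' < j)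

theorem stmt4 {n : ℕ} (D : Matrix (Fin n) (Fin n) ℤ) (hD : IsDefId D) :
    D.det = 0 ∨ D.det = 1 := by
  have instWF : WellFoundedLT (Fin n) := inferInstance
  obtain ⟨h01, hord⟩ := hD
  by_cases hz : ∃ i, ∀ j, D i j = 0
  · obtain ⟨i, hi⟩ := hz
    left
    exact Matrix.det_eq_zero_of_row_eq_zero i hi
  · push_neg at hz
    -- every row has a 1
    have hone : ∀ i, ∃ j, D i j = 1 := by
      intro i
      obtain ⟨j, hj⟩ := hz i
      exact ⟨j, (h01 i j).resolve_left hj⟩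
    choose f hf using hone
    have hsm : StrictMono f := by
      intro i i' hlt
      rcases hord i (f i) i' (f i') (hf i) (hf i') with ⟨hi, _⟩ | ⟨_, h⟩ | ⟨h, _⟩
      · exact absurd hi (ne_of_lt hlt)
      · exact h
      · exact absurd h (not_lt.2 hlt.le)
    have hfid : ∀ i, f i = i := by
      have hbij : Function.Bijective f :=
        ⟨hsm.injective, Finite.surjective_of_injective hsm.injective⟩
      set e := Equiv.ofBijective f hbij with he
      have hgsm : StrictMono e.symm := by
        intro a b hab
        by_contra hc
        have : e (e.symm b) ≤ e (e.symm a) := hsm.monotone (not_lt.1 hc)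
        simp only [Equiv.apply_symm_apply] at this
        exact absurd hab (not_lt.2 this)
      intro i
      refine le_antisymm ?_ hsm.le_apply
      have h1 : i ≤ e.symm i := hgsm.le_apply
      have h2 : f i ≤ f (e.symm i) := hsm.monotone h1
      have h3 : f (e.symm i) = i := e.apply_symm_apply i
      rwa [h3] at h2
    have hDi : D = 1 := by
      ext i j
      by_cases hij : i = j
      · subst hij
        have : f i = i := hfid i
        simp [Matrix.one_apply, this ▸ hf i]
      · simp only [Matrix.one_apply, if_neg hij]
        rcases h01 i j with h | h
        · exact h
        · exfalso
          have hfi : D i i = 1 := by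
            have h2 := hf i
            rwa [hfid i] at h2
          rcases hord i j i i h hfi with ⟨_, hj⟩ | ⟨hlt, _⟩ | ⟨hlt, _⟩
          · exact hij hj.symm
          · exact lt_irrefl i hlt
          · exact lt_irrefl i hlt
    rw [hDi, Matrix.det_one]
    right; rfl
end

section
/- If a square defective identity matrix D̃ has a nonzero entry at position (i,j) with i ≠ j, then det(D̃) = 0. -/
theorem stmt5 {n : ℕ} (D : Matrix (Fin n) (Fin n) ℤ) (hD : IsDefId D)
    (i j : Fin n) (hij : D i j ≠ 0) (hne : i ≠ j) :
    D.det = 0 := by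
  have h1 : D i j = 1 := (hD.1 i j).resolve_left hij
  rcases lt_or_gt_of_ne hne with h | h
  · -- i < j : some column among Iic j is zero
    suffices hz : ∃ c, ∀ r, D r c = 0 by
      obtain ⟨c, hc⟩ := hz
      exact Matrix.det_eq_zero_of_column_eq_zero c hc
    by_contra hcon
    push_neg at hcon
    choose f hf using hcon
    have hf1 : ∀ c, D (f c) c = 1 := fun c => (hD.1 (f c) c).resolve_left (hf c)
    have hmaps : ∀ c ∈ Finset.Iic j, f c ∈ Finset.Iic i := by
      intro c hc
      simp only [Finset.mem_Iic] at hc ⊢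
      rcases hD.2 (f c) c i j (hf1 c) h1 with ⟨he, _⟩ | ⟨hlt, _⟩ | ⟨_, hlt⟩
      · exact le_of_eq he
      · exact le_of_lt hlt
      · exact absurd hlt (not_lt.2 hc)
    have hcard : (Finset.Iic i).card < (Finset.Iic j).card := by
      simp [Fin.card_Iic]
      omega
    obtain ⟨c, hc, c', hc', hne', heq⟩ :=
      Finset.exists_ne_map_eq_of_card_lt_of_maps_to hcard hmaps
    rcases hD.2 (f c) c (f c') c' (hf1 c) (hf1 c') with ⟨_, he⟩ | ⟨hlt, _⟩ | ⟨hlt, _⟩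
    · exact hne' he
    · exact absurd heq (ne_of_lt hlt)
    · exact absurd heq.symm (ne_of_lt hlt)
  · -- j < i : some row among Iic i is zero
    suffices hz : ∃ r, ∀ c, D r c = 0 by
      obtain ⟨r, hr⟩ := hz
      exact Matrix.det_eq_zero_of_row_eq_zero r hr
    by_contra hcon
    push_neg at hcon
    choose f hf using hcon
    have hf1 : ∀ r, D r (f r) = 1 := fun r => (hD.1 r (f r)).resolve_left (hf r)
    have hmaps : ∀ r ∈ Finset.Iic i, f r ∈ Finset.Iic j := by
      intro r hr
      simp only [Finset.mem_Iic] at hr ⊢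
      rcases hD.2 r (f r) i j (hf1 r) h1 with ⟨_, he⟩ | ⟨_, hlt⟩ | ⟨hlt, _⟩
      · exact le_of_eq he
      · exact le_of_lt hlt
      · exact absurd hlt (not_lt.2 hr)
    have hcard : (Finset.Iic j).card < (Finset.Iic i).card := by
      simp [Fin.card_Iic]
      omega
    obtain ⟨r, hr, r', hr', hne', heq⟩ :=
      Finset.exists_ne_map_eq_of_card_lt_of_maps_to hcard hmaps
    rcases hD.2 r (f r) r' (f r') (hf1 r) (hf1 r') with ⟨he, _⟩ | ⟨_, hlt⟩ | ⟨_, hlt⟩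
    · exact hne' he
    · exact absurd heq (ne_of_lt hlt)
    · exact absurd heq.symm (ne_of_lt hlt)
end

section
/- Suppose an n×m integer matrix A factors as A = L₁·[[I_{a,b}, 0],[0, A']]·U₁ where L₁, U₁ are invertible over ℤ, and A' factors as A' = L₂·D̃'·U₂ with L₂, U₂ invertible over ℤ and D̃' a defective identity. Then A = L·D̃·U with L = L₁·diag(I_a, L₂), U = diag(I_b, U₂)·U₁ both invertible over ℤ, and D̃ = [[I_{a,b}, 0],[0, D̃']] a defective identity matrix. -/
/-- The natural linear order on a block index `Fin p ⊕ Fin q` (first block before second). -/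
def sidx {p q : ℕ} : Fin p ⊕ Fin q → ℕ := Sum.elim Fin.val fun j => p + j

/-- Defective identity, for block (sum-indexed) matrices, with rows and columns ordered so
that the first block comes first. -/
def IsDefIdS {a a' b b' : ℕ} (D : Matrix (Fin a ⊕ Fin a') (Fin b ⊕ Fin b') ℤ) : Prop :=
  (∀ i j, D i j = 0 ∨ D i j = 1) ∧
  ∀ i j i' j', D i j = 1 → D i' j' = 1 →
    (i = i' ∧ j = j') ∨ (sidx i < sidx i' ∧ sidx j < sidx j') ∨
      (sidx i' < sidx i ∧ sidx j' < sidx j)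

open Matrix

theorem fromBlocks_zero_mul_mul {R : Type*} [Semiring R] {m n o o' m' n' : Type*}
    [Fintype m] [Fintype n] [Fintype o'] [Fintype n'] [DecidableEq m] [DecidableEq n]
    (D : Matrix m n R) (L : Matrix m' o' R) (D' : Matrix o' n' R) (U : Matrix n' o R) :
    fromBlocks D 0 0 (L * D' * U) =
      fromBlocks (1 : Matrix m m R) 0 0 L * fromBlocks D 0 0 D' *
        fromBlocks (1 : Matrix n n R) 0 0 U := by
  simp [fromBlocks_multiply, Matrix.mul_assoc]

theorem isUnit_det_fromBlocks_one {R : Type*} [CommRing R] {m n : Type*}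
    [Fintype m] [Fintype n] [DecidableEq m] [DecidableEq n] {M : Matrix n n R}
    (hM : IsUnit M.det) : IsUnit (fromBlocks (1 : Matrix m m R) 0 0 M).det := by
  simpa [det_fromBlocks_zero₂₁] using hM

theorem isDefId_defId (p q : ℕ) : IsDefId (defId ℤ p q) := by
  refine ⟨fun i j => by rw [defId, of_apply]; split_ifs <;> simp, fun i j i' j' h h' => ?_⟩
  have hij : (i : ℕ) = j := by by_contra hc; simp [defId, hc] at h
  have hij' : (i' : ℕ) = j' := by by_contra hc; simp [defId, hc] at h'
  rcases lt_trichotomy i i' with hlt | rfl | hgt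
  · exact Or.inr (Or.inl ⟨hlt, Fin.lt_def.2 (by omega)⟩)
  · exact Or.inl ⟨rfl, Fin.ext (by omega)⟩
  · exact Or.inr (Or.inr ⟨hgt, Fin.lt_def.2 (by omega)⟩)

@[simp] theorem sidx_inl {p q : ℕ} (i : Fin p) : sidx (Sum.inl i : Fin p ⊕ Fin q) = i := rfl

@[simp] theorem sidx_inr {p q : ℕ} (i : Fin q) : sidx (Sum.inr i : Fin p ⊕ Fin q) = p + i := rfl

theorem IsDefId.fromBlocks {a a' b b' : ℕ} {D : Matrix (Fin a) (Fin b) ℤ}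
    {D' : Matrix (Fin a') (Fin b') ℤ} (hD : IsDefId D) (hD' : IsDefId D') :
    IsDefIdS (Matrix.fromBlocks D 0 0 D') := by
  refine ⟨?_, ?_⟩
  · rintro (i | i) (j | j)
    · exact hD.1 i j
    · exact Or.inl rfl
    · exact Or.inl rfl
    · exact hD'.1 i j
  · rintro (i | i) (j | j) (i' | i') (j' | j') h h' <;>
      simp only [fromBlocks_apply₁₁, fromBlocks_apply₁₂, fromBlocks_apply₂₁,
        fromBlocks_apply₂₂, Matrix.zero_apply, zero_ne_one] at h h'
    · rcases hD.2 i j i' j' h h' with ⟨rfl, rfl⟩ | ⟨hi, hj⟩ | ⟨hi, hj⟩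
      · exact Or.inl ⟨rfl, rfl⟩
      · exact Or.inr (Or.inl ⟨hi, hj⟩)
      · exact Or.inr (Or.inr ⟨hi, hj⟩)
    · exact Or.inr (Or.inl ⟨by simp; omega, by simp; omega⟩)
    · exact Or.inr (Or.inr ⟨by simp; omega, by simp; omega⟩)
    · rcases hD'.2 i j i' j' h h' with ⟨rfl, rfl⟩ | ⟨hi, hj⟩ | ⟨hi, hj⟩
      · exact Or.inl ⟨rfl, rfl⟩
      · exact Or.inr (Or.inl ⟨by simp [Fin.lt_def.1 hi], by simp [Fin.lt_def.1 hj]⟩)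
      · exact Or.inr (Or.inr ⟨by simp [Fin.lt_def.1 hi], by simp [Fin.lt_def.1 hj]⟩)

theorem stmt16 {a a' b b' : ℕ}
    (A : Matrix (Fin a ⊕ Fin a') (Fin b ⊕ Fin b') ℤ)
    (L₁ : Matrix (Fin a ⊕ Fin a') (Fin a ⊕ Fin a') ℤ)
    (U₁ : Matrix (Fin b ⊕ Fin b') (Fin b ⊕ Fin b') ℤ)
    (A' : Matrix (Fin a') (Fin b') ℤ)
    (L₂ : Matrix (Fin a') (Fin a') ℤ) (D' : Matrix (Fin a') (Fin b') ℤ)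
    (U₂ : Matrix (Fin b') (Fin b') ℤ)
    (hA : A = L₁ * Matrix.fromBlocks (defId ℤ a b) 0 0 A' * U₁)
    (hL₁ : IsUnit L₁.det) (hU₁ : IsUnit U₁.det)
    (hA' : A' = L₂ * D' * U₂)
    (hL₂ : IsUnit L₂.det) (hU₂ : IsUnit U₂.det) (hD' : IsDefId D') :
    A = (L₁ * Matrix.fromBlocks 1 0 0 L₂) *
          Matrix.fromBlocks (defId ℤ a b) 0 0 D' *
          (Matrix.fromBlocks 1 0 0 U₂ * U₁) ∧
      IsUnit (L₁ * Matrix.fromBlocks 1 0 0 L₂).det ∧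
      IsUnit (Matrix.fromBlocks 1 0 0 U₂ * U₁).det ∧
      IsDefIdS (Matrix.fromBlocks (defId ℤ a b) 0 0 D') := by
  refine ⟨?_, ?_, ?_, (isDefId_defId a b).fromBlocks hD'⟩
  · rw [hA, hA', fromBlocks_zero_mul_mul]
    simp only [Matrix.mul_assoc]
  · rw [det_mul]
    exact hL₁.mul (isUnit_det_fromBlocks_one hL₂)
  · rw [det_mul]
    exact (isUnit_det_fromBlocks_one hU₂).mul hU₁
end
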